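/- arXiv:1506.03963 — 9 statements merged into one kernel-verified Lean document; each statement's English description precedes it below -/
import Mathlib

section
/- Let Σ be an n × n signature matrix in block upper triangular form with square diagonal blocks Σ_{1,1}, …, Σ_{p,p}, such that every entry above the block diagonal in column j is strictly less than every finite entry of the corresponding diagonal block in the same column. If additionally T_k is a maximum value transversal of Σ_{k,k} for each k, then T = ⋃_k T_k is a maximum value transversal of Σ, where the value of a transversal T is ∑_{(i,j)∈T} σ_{ij}. -/
/-!
A finite transversal `τ` of a block upper triangular matrix never enters a block below the
diagonal, so the block index can only increase along `i ↦ τ i`. Since `τ` is a permutation,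
following a cycle of `τ` returns to the starting block, hence the block index is constant
along `τ`: every finite transversal is block diagonal. Its value is then the sum of the values
of its restrictions to the diagonal blocks, each of which is at most that of `π`.
-/

open Equiv

theorem Equiv.Perm.apply_eq_of_le_apply {α β : Type*} [Finite α] [PartialOrder β]
    (σ : Perm α) (f : α → β) (hle : ∀ a, f a ≤ f (σ a)) (a : α) : f (σ a) = f a := by
  obtain ⟨n, hn, hσn⟩ := (isOfFinOrder_of_finite σ).exists_pow_eq_one
  have hmono : Monotone fun k : ℕ => f ((σ ^ k) a) :=
    monotone_nat_of_le_succ fun k => by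
      simpa only [pow_succ', Perm.mul_apply] using hle ((σ ^ k) a)
  refine le_antisymm ?_ (hle a)
  simpa only [pow_one, hσn, Perm.one_apply] using hmono (Nat.one_le_iff_ne_zero.mpr hn.ne')

theorem block_apply_eq_of_ne_bot {ι κ α : Type*} [Finite ι] [LinearOrder κ] [Bot α]
    (S : ι → ι → α) (b : ι → κ) (hlow : ∀ i j, b j < b i → S i j = ⊥)
    (τ : Perm ι) (hτ : ∀ i, S i (τ i) ≠ ⊥) (i : ι) : b (τ i) = b i :=
  τ.apply_eq_of_le_apply b (fun j => not_lt.mp fun h => hτ j (hlow j (τ j) h)) i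

theorem stmt2_general (n p : ℕ) (S : Fin n → Fin n → WithBot ℤ) (b : Fin n → Fin p)
    (hlow : ∀ i j : Fin n, b j < b i → S i j = ⊥)
    (π : Equiv.Perm (Fin n))
    (hmax : ∀ τ : Equiv.Perm (Fin n), (∀ i, b (τ i) = b i) → (∀ i, S i (τ i) ≠ ⊥) →
      ∀ k : Fin p,
        ∑ i ∈ Finset.univ.filter (fun i => b i = k), S i (τ i) ≤
          ∑ i ∈ Finset.univ.filter (fun i => b i = k), S i (π i)) :
    ∀ τ : Equiv.Perm (Fin n), (∀ i, S i (τ i) ≠ ⊥) →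
      ∑ i, S i (τ i) ≤ ∑ i, S i (π i) := by
  intro τ hτ
  have hblock := hmax τ (block_apply_eq_of_ne_bot S b hlow τ hτ) hτ
  calc ∑ i, S i (τ i)
      = ∑ k, ∑ i ∈ Finset.univ.filter (fun i => b i = k), S i (τ i) :=
        (Finset.sum_fiberwise _ b _).symm
    _ ≤ ∑ k, ∑ i ∈ Finset.univ.filter (fun i => b i = k), S i (π i) :=
        Finset.sum_le_sum fun k _ => hblock k
    _ = ∑ i, S i (π i) := Finset.sum_fiberwise _ b _

/-- Let `S` be an `n × n` signature matrix in block upper triangular form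
(block assignment `b : Fin n → Fin p` monotone, entries strictly below the block diagonal
`⊥`), such that every entry above the block diagonal in a column `j` is strictly less than
every finite entry of the corresponding diagonal block in the same column.  If `π` is a
block-preserving transversal whose restriction to each diagonal block is a maximum value
transversal of that block, then `π` is a maximum value transversal of `S`, where the value
of a transversal is the sum of its entries. -/
theorem stmt2 (n p : ℕ) (S : Fin n → Fin n → WithBot ℤ) (b : Fin n → Fin p)
    (hmono : Monotone b)
    (hlow : ∀ i j : Fin n, b j < b i → S i j = ⊥)
    (habove : ∀ i j i' : Fin n, b i < b j → b i' = b j → S i' j ≠ ⊥ → S i j < S i' j)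
    (π : Equiv.Perm (Fin n))
    (hblock : ∀ i, b (π i) = b i)
    (hfin : ∀ i, S i (π i) ≠ ⊥)
    (hmax : ∀ τ : Equiv.Perm (Fin n), (∀ i, b (τ i) = b i) → (∀ i, S i (τ i) ≠ ⊥) →
      ∀ k : Fin p,
        ∑ i ∈ Finset.univ.filter (fun i => b i = k), S i (τ i) ≤
          ∑ i ∈ Finset.univ.filter (fun i => b i = k), S i (π i)) :
    ∀ τ : Equiv.Perm (Fin n), (∀ i, S i (τ i) ≠ ⊥) →
      ∑ i, S i (τ i) ≤ ∑ i, S i (π i) :=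
  stmt2_general n p S b hlow π hmax
end

section
/- Let A be an n × n 0–1 incidence matrix whose bipartite graph satisfies the strong Hall condition, i.e., |Γ(f)| ≥ |f| + 1 for every nonempty proper subset f of the row set. Then every nonzero entry of A lies on some transversal of A. -/
/-! Pin row `i` to column `j` and delete column `j` from every other row. The strong Hall
condition leaves one unit of slack in every proper row set, which pays for the deleted
column, so the pinned family still satisfies Hall's condition; a system of distinct
representatives for it is a transversal through `(i, j)`. -/

open Finset

namespace StrongHall

variable {ι α : Type*} [DecidableEq ι] [DecidableEq α]

def Condition [Fintype ι] (t : ι → Finset α) : Prop :=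
  ∀ s : Finset ι, s.Nonempty → s ≠ univ → #s + 1 ≤ #(s.biUnion t)

def pinned (t : ι → Finset α) (i : ι) (j : α) (k : ι) : Finset α :=
  if k = i then {j} else (t k).erase j

variable {t : ι → Finset α} {i : ι} {j : α} {s : Finset ι}

lemma biUnion_pinned_of_notMem (hi : i ∉ s) :
    s.biUnion (pinned t i j) = (s.biUnion t).erase j := by
  ext l
  simp only [mem_biUnion, mem_erase, pinned]
  constructor
  · rintro ⟨k, hk, hl⟩
    rw [if_neg (ne_of_mem_of_not_mem hk hi)] at hl
    exact ⟨(mem_erase.1 hl).1, k, hk, (mem_erase.1 hl).2⟩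
  · rintro ⟨hlj, k, hk, hl⟩
    exact ⟨k, hk, by rw [if_neg (ne_of_mem_of_not_mem hk hi)]; exact mem_erase.2 ⟨hlj, hl⟩⟩

lemma biUnion_pinned_of_mem (hi : i ∈ s) :
    s.biUnion (pinned t i j) = insert j ((s.erase i).biUnion t) := by
  conv_lhs => rw [← insert_erase hi]
  rw [biUnion_insert, biUnion_pinned_of_notMem (notMem_erase i s), pinned, if_pos rfl]
  ext l
  by_cases hl : l = j <;> simp [hl]

lemma card_le_card_biUnion_pinned [Fintype ι] (ht : Condition t) (s : Finset ι) :
    #s ≤ #(s.biUnion (pinned t i j)) := by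
  rcases s.eq_empty_or_nonempty with rfl | hs
  · simp
  by_cases hi : i ∈ s
  · rw [biUnion_pinned_of_mem hi, ← card_erase_add_one hi]
    rcases (s.erase i).eq_empty_or_nonempty with he | he
    · simp [he]
    calc #(s.erase i) + 1 ≤ #((s.erase i).biUnion t) :=
          ht _ he fun h => notMem_erase i s (h ▸ mem_univ i)
      _ ≤ _ := card_le_card (subset_insert _ _)
  · rw [biUnion_pinned_of_notMem hi]
    have hslack := ht s hs fun h => hi (h ▸ mem_univ i)
    have herase := pred_card_le_card_erase (s := s.biUnion t) (a := j)
    omega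

theorem exists_injective_apply_eq [Fintype ι] (ht : Condition t) (hij : j ∈ t i) :
    ∃ f : ι → α, Function.Injective f ∧ f i = j ∧ ∀ k, f k ∈ t k := by
  obtain ⟨f, hf, hft⟩ := (all_card_le_biUnion_card_iff_exists_injective (pinned t i j)).1
    (card_le_card_biUnion_pinned ht)
  have hfi : f i = j := by simpa [pinned] using hft i
  refine ⟨f, hf, hfi, fun k => ?_⟩
  by_cases hk : k = i
  · subst hk; rwa [hfi]
  · have hfk := hft k
    rw [pinned, if_neg hk] at hfk
    exact mem_of_mem_erase hfk

end StrongHall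

theorem stmt6_general (n : ℕ) (A : Fin n → Fin n → Bool)
    (hSH : ∀ f : Finset (Fin n), f.Nonempty → f ≠ Finset.univ →
      f.card + 1 ≤ (Finset.univ.filter (fun j => ∃ i ∈ f, A i j = true)).card) :
    ∀ i j : Fin n, A i j = true →
      ∃ π : Equiv.Perm (Fin n), π i = j ∧ ∀ k, A k (π k) = true := by
  intro i j hij
  set t : Fin n → Finset (Fin n) := fun k => univ.filter (A k · = true)
  have hΓ (f : Finset (Fin n)) :
      univ.filter (fun j => ∃ i ∈ f, A i j = true) = f.biUnion t := by
    ext; simp [t]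
  obtain ⟨f, hf, hfi, hft⟩ := StrongHall.exists_injective_apply_eq (t := t)
    (fun s hs hne => hΓ s ▸ hSH s hs hne) (by simpa [t] using hij)
  refine ⟨Equiv.ofBijective f (Finite.injective_iff_bijective.1 hf), hfi, fun k => ?_⟩
  simpa [t] using hft k

/-- If `A` is an `n × n` 0–1 incidence matrix (`n ≥ 2`) whose bipartite graph
satisfies the strong Hall condition (`|Γ(f)| ≥ |f| + 1` for every nonempty proper subset
`f` of the rows), then every nonzero entry of `A` lies on some transversal of `A`
(a permutation `π` with `A i (π i) = 1` for all `i`). -/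
theorem stmt6 (n : ℕ) (hn : 2 ≤ n) (A : Fin n → Fin n → Bool)
    (hSH : ∀ f : Finset (Fin n), f.Nonempty → f ≠ Finset.univ →
      f.card + 1 ≤ (Finset.univ.filter (fun j => ∃ i ∈ f, A i j = true)).card) :
    ∀ i j : Fin n, A i j = true →
      ∃ π : Equiv.Perm (Fin n), π i = j ∧ ∀ k, A k (π k) = true :=
  stmt6_general n A hSH
end

section
/- Let A be an n × n 0–1 matrix with a transversal. If the bipartite graph of A satisfies the strong Hall condition (|Γ(f)| ≥ |f| + 1 for all nonempty proper subsets f of rows), then A is irreducible: there is no pair of permutation matrices P, Q such that PAQ is block upper triangular with more than one diagonal block (equivalently, there is no nonempty proper subset R of rows and subset C of columns with |R| + |C| = n and a_{ij} = 0 for all i ∈ R, j ∈ C). -/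
theorem card_filter_exists_add_card_le_of_forall_eq_false {ι κ : Type*}
    [Fintype κ] [DecidableEq κ] (A : ι → κ → Bool) (R : Finset ι) (C : Finset κ)
    [DecidablePred fun j => ∃ i ∈ R, A i j = true]
    (hzero : ∀ i ∈ R, ∀ j ∈ C, A i j = false) :
    (Finset.univ.filter (fun j => ∃ i ∈ R, A i j = true)).card + C.card ≤ Fintype.card κ := by
  have hdisj : Disjoint (Finset.univ.filter (fun j => ∃ i ∈ R, A i j = true)) C := by
    refine Finset.disjoint_left.mpr fun j hj hjC => ?_
    obtain ⟨i, hiR, hA⟩ := (Finset.mem_filter.mp hj).2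
    simp [hzero i hiR j hjC] at hA
  rw [← Finset.card_union_of_disjoint hdisj]
  exact Finset.card_le_univ _

theorem stmt8_general (n : ℕ) (A : Fin n → Fin n → Bool)
    (hSH : ∀ f : Finset (Fin n), f.Nonempty → f ≠ Finset.univ →
      f.card + 1 ≤ (Finset.univ.filter (fun j => ∃ i ∈ f, A i j = true)).card) :
    ¬ ∃ (R C : Finset (Fin n)), R.Nonempty ∧ R ≠ Finset.univ ∧
      R.card + C.card = n ∧ ∀ i ∈ R, ∀ j ∈ C, A i j = false := by
  rintro ⟨R, C, hRne, hRuniv, hcard, hzero⟩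
  have hHall := hSH R hRne hRuniv
  have hblock := card_filter_exists_add_card_le_of_forall_eq_false A R C hzero
  rw [Fintype.card_fin] at hblock
  omega

/-- Let `A` be an `n × n` 0–1 matrix (`n ≥ 2`) possessing a transversal.  If
its bipartite graph satisfies the strong Hall condition (`|Γ(f)| ≥ |f| + 1` for every
nonempty proper subset `f` of rows), then `A` is irreducible: there are no nonempty proper
row subset `R` and column subset `C` with `|R| + |C| = n` and `A i j = 0` for all
`i ∈ R`, `j ∈ C`. -/
theorem stmt8 (n : ℕ) (hn : 2 ≤ n) (A : Fin n → Fin n → Bool)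
    (htrans : ∃ π : Equiv.Perm (Fin n), ∀ i, A i (π i) = true)
    (hSH : ∀ f : Finset (Fin n), f.Nonempty → f ≠ Finset.univ →
      f.card + 1 ≤ (Finset.univ.filter (fun j => ∃ i ∈ f, A i j = true)).card) :
    ¬ ∃ (R C : Finset (Fin n)), R.Nonempty ∧ R ≠ Finset.univ ∧
      R.card + C.card = n ∧ ∀ i ∈ R, ∀ j ∈ C, A i j = false :=
  stmt8_general n A hSH
end

section
/- The set of dual-optimal offset pairs of a structurally nonsingular signature matrix is closed under componentwise minimum: if (c, d) and (c', d') are both nonnegative integer vectors satisfying d_j − c_i ≥ σ_{ij} on the sparsity pattern and d_j − c_i = σ_{ij} on a fixed maximum value transversal T (and similarly for (c', d')), then (min(c, c'), min(d, d')) is also such a pair. Consequently, a unique elementwise smallest dual-optimal pair (the canonical offsets) exists. -/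
/-!
Feasibility survives the componentwise minimum because `min d d' - min c c'` is at least
`min (d - c) (d' - c')`, and tightness on the transversal survives because both pairs have the
same differences `d (π i) - c i = σ i (π i)` there. The dual-optimal pairs thus form an
inf-closed set of nonnegative integer vectors; a pair minimising `∑ c + ∑ d` is then least,
since its minimum with any other pair is dual-optimal and has no larger sum.
-/

/-- `(c, d)` is a dual-optimal offset pair for `S` with respect to the maximum value
transversal `π`: nonnegative, feasible on the sparsity pattern, tight on `π`. -/
def DualOpt {n : ℕ} (S : Fin n → Fin n → WithBot ℤ) (π : Equiv.Perm (Fin n))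
    (c d : Fin n → ℤ) : Prop :=
  (∀ i, 0 ≤ c i) ∧ (∀ j, 0 ≤ d j) ∧
  (∀ i j : Fin n, S i j ≠ ⊥ → S i j ≤ ((d j - c i : ℤ) : WithBot ℤ)) ∧
  (∀ i, S i (π i) = ((d (π i) - c i : ℤ) : WithBot ℤ))

section MinSub

variable {α : Type*} [AddCommGroup α] [LinearOrder α] [IsOrderedAddMonoid α]

theorem min_sub_le_min_sub_min (a a' b b' : α) :
    min (a - b) (a' - b') ≤ min a a' - min b b' := by
  rcases le_total b b' with h | h
  · rw [min_eq_left h, ← min_sub_sub_right]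
    exact min_le_min le_rfl (sub_le_sub_left h a')
  · rw [min_eq_right h, ← min_sub_sub_right]
    exact min_le_min (sub_le_sub_left h a) le_rfl

theorem min_sub_min_of_sub_eq {a a' b b' : α} (h : a - b = a' - b') :
    min a a' - min b b' = a - b := by
  obtain rfl : a' = a - b + b' := sub_eq_iff_eq_add.1 h.symm
  nth_rewrite 1 [← sub_add_cancel a b]
  rw [min_add_add_left, add_sub_cancel_right]

end MinSub

theorem DualOpt.min {n : ℕ} {S : Fin n → Fin n → WithBot ℤ} {π : Equiv.Perm (Fin n)}
    {c d c' d' : Fin n → ℤ} (h : DualOpt S π c d) (h' : DualOpt S π c' d') :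
    DualOpt S π (fun i => min (c i) (c' i)) (fun j => min (d j) (d' j)) := by
  obtain ⟨hc, hd, hfeas, htight⟩ := h
  obtain ⟨hc', hd', hfeas', htight'⟩ := h'
  refine ⟨fun i => le_min (hc i) (hc' i), fun j => le_min (hd j) (hd' j),
    fun i j hij => ?_, fun i => ?_⟩
  · refine (le_min (hfeas i j hij) (hfeas' i j hij)).trans ?_
    rw [← WithBot.coe_min, WithBot.coe_le_coe]
    exact min_sub_le_min_sub_min _ _ _ _
  · have hdiff : d (π i) - c i = d' (π i) - c' i :=
      WithBot.coe_injective ((htight i).symm.trans (htight' i))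
    rw [htight i, min_sub_min_of_sub_eq hdiff]

theorem InfClosed.exists_isLeast_of_strictMono {α : Type*} [Lattice α] {s : Set α}
    (hs : InfClosed s) (hne : s.Nonempty) {f : α → ℤ} (hf : StrictMono f)
    (hbdd : BddBelow (f '' s)) : ∃ x, IsLeast s x := by
  obtain ⟨_, ⟨x, hx, rfl⟩, hmin⟩ := Int.exists_least_of_bdd hbdd (hne.image f)
  refine ⟨x, hx, fun y hy => ?_⟩
  by_contra hxy
  exact (hmin _ ⟨_, hs hx hy, rfl⟩).not_gt (hf (inf_lt_left.2 hxy))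

theorem strictMono_sum_add_sum {ι κ : Type*} [Fintype ι] [Fintype κ] :
    StrictMono fun cd : (ι → ℤ) × (κ → ℤ) => ∑ i, cd.1 i + ∑ j, cd.2 j := by
  intro p q hpq
  rcases Prod.lt_iff.1 hpq with ⟨h₁, h₂⟩ | ⟨h₁, h₂⟩
  · exact add_lt_add_of_lt_of_le (Fintype.sum_strictMono h₁) (Fintype.sum_mono h₂)
  · exact add_lt_add_of_le_of_lt (Fintype.sum_mono h₁) (Fintype.sum_strictMono h₂)

theorem infClosed_dualOpt {n : ℕ} (S : Fin n → Fin n → WithBot ℤ) (π : Equiv.Perm (Fin n)) :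
    InfClosed {cd : (Fin n → ℤ) × (Fin n → ℤ) | DualOpt S π cd.1 cd.2} :=
  fun _ hp _ hq => DualOpt.min hp hq

theorem bddBelow_sum_add_sum_dualOpt {n : ℕ} (S : Fin n → Fin n → WithBot ℤ)
    (π : Equiv.Perm (Fin n)) :
    BddBelow ((fun cd : (Fin n → ℤ) × (Fin n → ℤ) => ∑ i, cd.1 i + ∑ j, cd.2 j) ''
      {cd | DualOpt S π cd.1 cd.2}) := by
  refine ⟨0, ?_⟩
  rintro _ ⟨cd, ⟨hc, hd, -⟩, rfl⟩
  exact add_nonneg (Fintype.sum_nonneg hc) (Fintype.sum_nonneg hd)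

theorem stmt11_general (n : ℕ) (S : Fin n → Fin n → WithBot ℤ) (π : Equiv.Perm (Fin n))
    (hex : ∃ c d : Fin n → ℤ, DualOpt S π c d) :
    (∀ c d c' d' : Fin n → ℤ, DualOpt S π c d → DualOpt S π c' d' →
      DualOpt S π (fun i => min (c i) (c' i)) (fun j => min (d j) (d' j))) ∧
    ∃! cd : (Fin n → ℤ) × (Fin n → ℤ), DualOpt S π cd.1 cd.2 ∧
      ∀ c' d' : Fin n → ℤ, DualOpt S π c' d' →
        (∀ i, cd.1 i ≤ c' i) ∧ (∀ j, cd.2 j ≤ d' j) := by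
  refine ⟨fun _ _ _ _ => DualOpt.min, ?_⟩
  obtain ⟨c, d, h⟩ := hex
  obtain ⟨cd, hcd, hleast⟩ := (infClosed_dualOpt S π).exists_isLeast_of_strictMono ⟨(c, d), h⟩
    strictMono_sum_add_sum (bddBelow_sum_add_sum_dualOpt S π)
  refine ⟨cd, ⟨hcd, fun c' d' h' => hleast (a := (c', d')) h'⟩, ?_⟩
  rintro cd' ⟨hcd', hleast'⟩
  exact le_antisymm (hleast' cd.1 cd.2 hcd) (hleast hcd')

/-- For a structurally nonsingular signature matrix `S` with a maximum value
transversal `π`, the set of dual-optimal offset pairs is closed under componentwise minimum;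
consequently a unique elementwise smallest dual-optimal pair (the canonical offsets) exists. -/
theorem stmt11 (n : ℕ) (S : Fin n → Fin n → WithBot ℤ) (π : Equiv.Perm (Fin n))
    (hT : ∀ i, S i (π i) ≠ ⊥)
    (hMVT : ∀ τ : Equiv.Perm (Fin n), (∀ i, S i (τ i) ≠ ⊥) →
      ∑ i, S i (τ i) ≤ ∑ i, S i (π i))
    (hex : ∃ c d : Fin n → ℤ, DualOpt S π c d) :
    (∀ c d c' d' : Fin n → ℤ, DualOpt S π c d → DualOpt S π c' d' →
      DualOpt S π (fun i => min (c i) (c' i)) (fun j => min (d j) (d' j))) ∧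
    ∃! cd : (Fin n → ℤ) × (Fin n → ℤ), DualOpt S π cd.1 cd.2 ∧
      ∀ c' d' : Fin n → ℤ, DualOpt S π c' d' →
        (∀ i, cd.1 i ≤ c' i) ∧ (∀ j, cd.2 j ≤ d' j) :=
  stmt11_general n S π hex
end

section
/- For an n × n signature matrix Σ in block upper triangular form with structurally nonsingular diagonal blocks, the maximum transversal value of Σ equals the sum of the maximum transversal values of the diagonal blocks, provided that for every column j and every position (i, j) above the block diagonal with σ_{ij} > −∞ one has σ_{ij} ≤ d_j, where d_j is the canonical column offset determined by the diagonal blocks alone. -/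
/-- `(c, d)` are block-diagonal offsets for the signature matrix `S` with block assignment
`b`: nonnegative, dual feasible on the within-block sparsity pattern, and tight on some
block-preserving transversal whose restriction to each block is a maximum value transversal
of that diagonal block. -/
def BlockOffsets {n p : ℕ} (S : Fin n → Fin n → WithBot ℤ) (b : Fin n → Fin p)
    (c d : Fin n → ℤ) : Prop :=
  (∀ i, 0 ≤ c i) ∧ (∀ j, 0 ≤ d j) ∧
  (∀ i j : Fin n, b i = b j → S i j ≠ ⊥ → S i j ≤ ((d j - c i : ℤ) : WithBot ℤ)) ∧
  ∃ π : Equiv.Perm (Fin n), (∀ i, b (π i) = b i) ∧ (∀ i, S i (π i) ≠ ⊥) ∧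
    (∀ k : Fin p, ∀ τ : Equiv.Perm (Fin n), (∀ i, b (τ i) = b i) →
      (∀ i, b i = k → S i (τ i) ≠ ⊥) →
      ∑ i ∈ Finset.univ.filter (fun i => b i = k), S i (τ i) ≤
        ∑ i ∈ Finset.univ.filter (fun i => b i = k), S i (π i)) ∧
    ∀ i, S i (π i) = ((d (π i) - c i : ℤ) : WithBot ℤ)

/-- The canonical (elementwise smallest) block-diagonal offsets. -/
def CanonicalBlockOffsets {n p : ℕ} (S : Fin n → Fin n → WithBot ℤ) (b : Fin n → Fin p)
    (c d : Fin n → ℤ) : Prop :=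
  BlockOffsets S b c d ∧
    ∀ c' d' : Fin n → ℤ, BlockOffsets S b c' d' →
      (∀ i, c i ≤ c' i) ∧ (∀ j, d j ≤ d' j)

/-!
Below the block diagonal every entry is `⊥`, so a transversal with finite entries sends each
row to a column of the same or a later block. A permutation cannot move every index weakly
forward without fixing all blocks, so every finite transversal is block preserving, and its
value is the sum of its values on the diagonal blocks. The tight transversal of the canonical
offsets is maximal on each block, hence maximal for the whole matrix.
-/

open Finset

/-- Along the orbit of `i`, `f` increases weakly and returns to `f i`. -/
theorem Equiv.Perm.apply_eq_of_le_apply_s12 {α β : Type*} [Finite α] [PartialOrder β]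
    (τ : Equiv.Perm α) {f : α → β} (h : ∀ i, f i ≤ f (τ i)) (i : α) : f (τ i) = f i := by
  have hpow : ∀ (k : ℕ) (j : α), f j ≤ f ((τ ^ k) j) := by
    intro k
    induction k with
    | zero => simp
    | succ k ih => intro j; rw [pow_succ', Equiv.Perm.mul_apply]; exact (ih j).trans (h _)
  refine le_antisymm ?_ (h i)
  calc f (τ i) ≤ f ((τ ^ (orderOf τ - 1)) (τ i)) := hpow _ _
    _ = f i := by
      rw [← Equiv.Perm.mul_apply, ← pow_succ, Nat.sub_add_cancel (orderOf_pos τ),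
        pow_orderOf_eq_one, Equiv.Perm.one_apply]

theorem block_apply_eq_of_apply_ne_bot {ι κ M : Type*} [Finite ι] [LinearOrder κ] [Bot M]
    {S : ι → ι → M} {b : ι → κ} (hlow : ∀ i j, b j < b i → S i j = ⊥)
    (τ : Equiv.Perm ι) (hτ : ∀ i, S i (τ i) ≠ ⊥) (i : ι) : b (τ i) = b i :=
  τ.apply_eq_of_le_apply_s12 (fun j => not_lt.mp fun hj => hτ j (hlow j (τ j) hj)) i

theorem stmt12_general (n p : ℕ) (S : Fin n → Fin n → WithBot ℤ) (b : Fin n → Fin p)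
    (hlow : ∀ i j : Fin n, b j < b i → S i j = ⊥)
    (c d : Fin n → ℤ) (hcd : CanonicalBlockOffsets S b c d) :
    ∃ π : Equiv.Perm (Fin n), (∀ i, b (π i) = b i) ∧ (∀ i, S i (π i) ≠ ⊥) ∧
      (∀ τ : Equiv.Perm (Fin n), (∀ i, S i (τ i) ≠ ⊥) →
        ∑ i, S i (τ i) ≤ ∑ i, S i (π i)) ∧
      (∀ k : Fin p, ∀ τ : Equiv.Perm (Fin n), (∀ i, b (τ i) = b i) →
        (∀ i, b i = k → S i (τ i) ≠ ⊥) →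
        ∑ i ∈ Finset.univ.filter (fun i => b i = k), S i (τ i) ≤
          ∑ i ∈ Finset.univ.filter (fun i => b i = k), S i (π i)) ∧
      ∑ i, S i (π i) =
        ∑ k : Fin p, ∑ i ∈ Finset.univ.filter (fun i => b i = k), S i (π i) := by
  obtain ⟨⟨-, -, -, π, hπb, hπne, hπmax, -⟩, -⟩ := hcd
  refine ⟨π, hπb, hπne, fun τ hτ => ?_, hπmax, (sum_fiberwise _ _ _).symm⟩
  have hτb := block_apply_eq_of_apply_ne_bot hlow τ hτ
  calc ∑ i, S i (τ i)
      = ∑ k : Fin p, ∑ i ∈ univ.filter (fun i => b i = k), S i (τ i) :=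
        (sum_fiberwise _ _ _).symm
    _ ≤ ∑ k : Fin p, ∑ i ∈ univ.filter (fun i => b i = k), S i (π i) :=
        sum_le_sum fun k _ => hπmax k τ hτb fun i _ => hτ i
    _ = ∑ i, S i (π i) := sum_fiberwise _ _ _

/-- For an `n × n` signature matrix `S` in block upper triangular form
(monotone block assignment `b`, entries below the block diagonal `⊥`) with structurally
nonsingular diagonal blocks, if every finite entry `σ i j` strictly above the block diagonal
satisfies `σ i j ≤ d j`, where `(c, d)` are the canonical offsets determined by the diagonal
blocks alone, then the maximum transversal value of `S` equals the sum of the maximum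
transversal values of the diagonal blocks: there is a block-preserving transversal `π` that
is simultaneously a maximum value transversal of `S` and of each diagonal block, so that
`max value of S = ∑ over blocks of the block maxima`. -/
theorem stmt12 (n p : ℕ) (S : Fin n → Fin n → WithBot ℤ) (b : Fin n → Fin p)
    (hmono : Monotone b)
    (hlow : ∀ i j : Fin n, b j < b i → S i j = ⊥)
    (hblocks : ∀ k : Fin p, ∃ τ : Equiv.Perm (Fin n), (∀ i, b (τ i) = b i) ∧
      ∀ i, b i = k → S i (τ i) ≠ ⊥)
    (c d : Fin n → ℤ) (hcd : CanonicalBlockOffsets S b c d)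
    (habove : ∀ i j : Fin n, b i < b j → S i j ≠ ⊥ → S i j ≤ ((d j : ℤ) : WithBot ℤ)) :
    ∃ π : Equiv.Perm (Fin n), (∀ i, b (π i) = b i) ∧ (∀ i, S i (π i) ≠ ⊥) ∧
      (∀ τ : Equiv.Perm (Fin n), (∀ i, S i (τ i) ≠ ⊥) →
        ∑ i, S i (τ i) ≤ ∑ i, S i (π i)) ∧
      (∀ k : Fin p, ∀ τ : Equiv.Perm (Fin n), (∀ i, b (τ i) = b i) →
        (∀ i, b i = k → S i (τ i) ≠ ⊥) →
        ∑ i ∈ Finset.univ.filter (fun i => b i = k), S i (τ i) ≤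
          ∑ i ∈ Finset.univ.filter (fun i => b i = k), S i (π i)) ∧
      ∑ i, S i (π i) =
        ∑ k : Fin p, ∑ i ∈ Finset.univ.filter (fun i => b i = k), S i (π i) :=
  stmt12_general n p S b hlow c d hcd
end

section
/- For the crane DAE system, the system Jacobian J given in the paper (8 × 8, with rows f_1,…,f_8 and columns x, z, d, r, θ, τ, u_1, u_2 as in equation (9)) has determinant det J = −τ C_3 cos(θ); hence J is nonsingular if and only if τ ≠ 0, C_3 ≠ 0, and cos(θ) ≠ 0. -/
/-!
The rows of `f₇`, `f₈` are the unit vectors picking out `x` and `z`, and the columns of `u₁`, `u₂`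
each have a single nonzero entry (`-1` in `f₃`, `C₃` in `f₄`). Laplace expansion along these four
lines, then along the column of `d` (whose only remaining entry is the `1` of `f₅`), leaves the
`3 × 3` minor on the columns `r, θ, τ` of `f₁, f₂, f₆`, whose determinant is
`τ cos θ (cos² θ + sin² θ) = τ cos θ`.
-/

namespace Matrix

variable {R : Type*} [CommRing R] {n : ℕ}

theorem det_succ_row_of_eq_zero (A : Matrix (Fin (n + 1)) (Fin (n + 1)) R) {i j : Fin (n + 1)}
    (h : ∀ k ≠ j, A i k = 0) :
    A.det = (-1) ^ (i + j : ℕ) * A i j * (A.submatrix i.succAbove j.succAbove).det := by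
  rw [det_succ_row A i,
    Finset.sum_eq_single j (fun k _ hk => by rw [h k hk, mul_zero, zero_mul]) (by simp)]

theorem det_succ_column_of_eq_zero (A : Matrix (Fin (n + 1)) (Fin (n + 1)) R) {i j : Fin (n + 1)}
    (h : ∀ k ≠ i, A k j = 0) :
    A.det = (-1) ^ (i + j : ℕ) * A i j * (A.submatrix i.succAbove j.succAbove).det := by
  rw [det_succ_column A j,
    Finset.sum_eq_single i (fun k _ hk => by rw [h k hk, mul_zero, zero_mul]) (by simp)]

end Matrix

open Real Matrix

/-- Rows `f₁, …, f₈`, columns `x, z, d, r, θ, τ, u₁, u₂`. -/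
noncomputable def craneJacobian (M₁ M₂ J C₃ τ θ r : ℝ) : Matrix (Fin 8) (Fin 8) ℝ :=
  !![M₂, 0, 0, 0, τ * Real.cos θ, Real.sin θ, 0, 0;
     0, M₂, 0, 0, -τ * Real.sin θ, Real.cos θ, 0, 0;
     0, 0, M₁, 0, 0, 0, -1, 0;
     0, 0, 0, J, 0, 0, 0, C₃;
     0, 0, 1, Real.sin θ, r * Real.cos θ, 0, 0, 0;
     0, 0, 0, Real.cos θ, -r * Real.sin θ, 0, 0, 0;
     1, 0, 0, 0, 0, 0, 0, 0;
     0, 1, 0, 0, 0, 0, 0, 0]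

theorem det_craneJacobian (M₁ M₂ J C₃ τ θ r : ℝ) :
    (craneJacobian M₁ M₂ J C₃ τ θ r).det = -τ * C₃ * cos θ := by
  rw [craneJacobian,
    det_succ_row_of_eq_zero _ (i := 6) (j := 0) (by intro k hk; fin_cases k <;> simp_all),
    det_succ_row_of_eq_zero _ (i := 6) (j := 0)
      (by intro k hk; fin_cases k <;> simp_all [Fin.succAbove]),
    det_succ_column_of_eq_zero _ (i := 2) (j := 4)
      (by intro k hk; fin_cases k <;> simp_all [Fin.succAbove]),
    det_succ_column_of_eq_zero _ (i := 2) (j := 4)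
      (by intro k hk; fin_cases k <;> simp_all [Fin.succAbove]),
    det_succ_column_of_eq_zero _ (i := 2) (j := 0)
      (by intro k hk; fin_cases k <;> simp_all [Fin.succAbove]),
    det_fin_three]
  simp [Fin.succAbove, Fin.lt_def]
  linear_combination τ * C₃ * cos θ * sin_sq_add_cos_sq θ

theorem stmt13_general (M₁ M₂ J C₃ τ θ r : ℝ) :
    (Matrix.det !![M₂, 0, 0, 0, τ * Real.cos θ, Real.sin θ, 0, 0;
                   0, M₂, 0, 0, -τ * Real.sin θ, Real.cos θ, 0, 0;
                   0, 0, M₁, 0, 0, 0, -1, 0;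
                   0, 0, 0, J, 0, 0, 0, C₃;
                   0, 0, 1, Real.sin θ, r * Real.cos θ, 0, 0, 0;
                   0, 0, 0, Real.cos θ, -r * Real.sin θ, 0, 0, 0;
                   1, 0, 0, 0, 0, 0, 0, 0;
                   0, 1, 0, 0, 0, 0, 0, 0] = -τ * C₃ * Real.cos θ) ∧
    (Matrix.det !![M₂, 0, 0, 0, τ * Real.cos θ, Real.sin θ, 0, 0;
                   0, M₂, 0, 0, -τ * Real.sin θ, Real.cos θ, 0, 0;
                   0, 0, M₁, 0, 0, 0, -1, 0;
                   0, 0, 0, J, 0, 0, 0, C₃;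
                   0, 0, 1, Real.sin θ, r * Real.cos θ, 0, 0, 0;
                   0, 0, 0, Real.cos θ, -r * Real.sin θ, 0, 0, 0;
                   1, 0, 0, 0, 0, 0, 0, 0;
                   0, 1, 0, 0, 0, 0, 0, 0] ≠ 0 ↔
      τ ≠ 0 ∧ C₃ ≠ 0 ∧ Real.cos θ ≠ 0) := by
  have hdet := det_craneJacobian M₁ M₂ J C₃ τ θ r
  refine ⟨hdet, ?_⟩
  rw [craneJacobian] at hdet
  rw [hdet]
  simp only [neg_mul, ne_eq, neg_eq_zero, mul_eq_zero, not_or, and_assoc]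

/-- The 8 × 8 system Jacobian of the crane DAE system (rows `f₁,…,f₈`,
columns `x, z, d, r, θ, τ, u₁, u₂`) has determinant `−τ C₃ cos θ`; hence it is nonsingular
iff `τ ≠ 0`, `C₃ ≠ 0` and `cos θ ≠ 0`. -/
theorem stmt13 (M₁ M₂ J C₁ C₂ C₃ τ θ r : ℝ) :
    (Matrix.det !![M₂, 0, 0, 0, τ * Real.cos θ, Real.sin θ, 0, 0;
                   0, M₂, 0, 0, -τ * Real.sin θ, Real.cos θ, 0, 0;
                   0, 0, M₁, 0, 0, 0, -1, 0;
                   0, 0, 0, J, 0, 0, 0, C₃;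
                   0, 0, 1, Real.sin θ, r * Real.cos θ, 0, 0, 0;
                   0, 0, 0, Real.cos θ, -r * Real.sin θ, 0, 0, 0;
                   1, 0, 0, 0, 0, 0, 0, 0;
                   0, 1, 0, 0, 0, 0, 0, 0] = -τ * C₃ * Real.cos θ) ∧
    (Matrix.det !![M₂, 0, 0, 0, τ * Real.cos θ, Real.sin θ, 0, 0;
                   0, M₂, 0, 0, -τ * Real.sin θ, Real.cos θ, 0, 0;
                   0, 0, M₁, 0, 0, 0, -1, 0;
                   0, 0, 0, J, 0, 0, 0, C₃;
                   0, 0, 1, Real.sin θ, r * Real.cos θ, 0, 0, 0;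
                   0, 0, 0, Real.cos θ, -r * Real.sin θ, 0, 0, 0;
                   1, 0, 0, 0, 0, 0, 0, 0;
                   0, 1, 0, 0, 0, 0, 0, 0] ≠ 0 ↔
      τ ≠ 0 ∧ C₃ ≠ 0 ∧ Real.cos θ ≠ 0) :=
  stmt13_general M₁ M₂ J C₃ τ θ r
end

section
/- Let A be an n × n 0–1 matrix whose bipartite graph is connected and in which every 1-entry lies on some transversal, with n ≥ 2. Then A satisfies the strong Hall condition: |Γ(f)| ≥ |f| + 1 for every nonempty proper subset f of the rows. -/
/-!
If `|Γ(f)| ≤ |f|` for some set of rows `f`, then every transversal maps `f` onto `Γ(f)`.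
Hence a 1-entry `(i, j)` with `j ∈ Γ(f)` can lie on a transversal only if `i ∈ f`: the column
`j` is already taken by a row of `f`. So `f ∪ Γ(f)` is closed under adjacency in the bipartite
graph, and connectivity forces `f` to be all rows.
-/

open Finset Relation

variable {ι κ : Type*}

def bipartiteAdj (A : ι → κ → Bool) (a b : ι ⊕ κ) : Prop :=
  (∃ i j, A i j = true ∧ a = Sum.inl i ∧ b = Sum.inr j) ∨
    (∃ i j, A i j = true ∧ a = Sum.inr j ∧ b = Sum.inl i)

theorem Relation.ReflTransGen.mem_of_forall_mem {α : Type*} {r : α → α → Prop} {S : Set α}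
    (hS : ∀ a b, r a b → a ∈ S → b ∈ S) {a b : α} (hab : ReflTransGen r a b) (ha : a ∈ S) :
    b ∈ S := by
  induction hab with
  | refl => exact ha
  | tail _ hbc ih => exact hS _ _ hbc ih

theorem eq_univ_of_bipartiteAdj_closed [Fintype ι] {A : ι → κ → Bool}
    (hconn : ∀ u v, ReflTransGen (bipartiteAdj A) u v) {f : Finset ι} {g : Finset κ}
    (hrow : ∀ i j, A i j = true → i ∈ f → j ∈ g) (hcol : ∀ i j, A i j = true → j ∈ g → i ∈ f)
    (hf : f.Nonempty) : f = univ := by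
  obtain ⟨i₀, hi₀⟩ := hf
  refine eq_univ_of_forall fun i => ?_
  refine (hconn (.inl i₀) (.inl i)).mem_of_forall_mem (S := {v | Sum.elim (· ∈ f) (· ∈ g) v})
    ?_ hi₀
  rintro _ _ (⟨i, j, hij, rfl, rfl⟩ | ⟨i, j, hij, rfl, rfl⟩)
  · exact hrow i j hij
  · exact hcol i j hij

section columnNeighbors

variable [Fintype κ] (A : ι → κ → Bool)

/-- `Γ(f)` -/
def columnNeighbors (f : Finset ι) : Finset κ :=
  univ.filter fun j => ∃ i ∈ f, A i j = true

variable {A}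

@[simp]
theorem mem_columnNeighbors {f : Finset ι} {j : κ} :
    j ∈ columnNeighbors A f ↔ ∃ i ∈ f, A i j = true := by
  simp [columnNeighbors]

theorem image_subset_columnNeighbors [DecidableEq κ] {σ : ι → κ} (hσ : ∀ k, A k (σ k) = true)
    (f : Finset ι) : f.image σ ⊆ columnNeighbors A f := by
  intro j hj
  obtain ⟨i, hi, rfl⟩ := mem_image.1 hj
  exact mem_columnNeighbors.2 ⟨i, hi, hσ i⟩

theorem image_eq_columnNeighbors [DecidableEq κ] {σ : ι → κ} (hσinj : Function.Injective σ)
    (hσ : ∀ k, A k (σ k) = true) {f : Finset ι} (hcard : #(columnNeighbors A f) ≤ #f) :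
    f.image σ = columnNeighbors A f :=
  eq_of_subset_of_card_le (image_subset_columnNeighbors hσ f)
    (by rwa [card_image_of_injective _ hσinj])

theorem mem_of_mem_columnNeighbors
    (hcover : ∀ i j, A i j = true →
      ∃ σ : ι → κ, Function.Injective σ ∧ σ i = j ∧ ∀ k, A k (σ k) = true)
    {f : Finset ι} (hcard : #(columnNeighbors A f) ≤ #f) {i : ι} {j : κ} (hij : A i j = true)
    (hj : j ∈ columnNeighbors A f) : i ∈ f := by
  classical
  obtain ⟨σ, hσinj, rfl, hσ⟩ := hcover i j hij
  rw [← image_eq_columnNeighbors hσinj hσ hcard] at hj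
  obtain ⟨i', hi', hσi'⟩ := mem_image.1 hj
  exact hσinj hσi' ▸ hi'

end columnNeighbors

theorem stmt15_general (n : ℕ) (A : Fin n → Fin n → Bool)
    (hconn : ∀ u v : Fin n ⊕ Fin n,
      Relation.ReflTransGen
        (fun a b =>
          (∃ i j, A i j = true ∧ a = Sum.inl i ∧ b = Sum.inr j) ∨
          (∃ i j, A i j = true ∧ a = Sum.inr j ∧ b = Sum.inl i)) u v)
    (hcover : ∀ i j : Fin n, A i j = true →
      ∃ π : Equiv.Perm (Fin n), π i = j ∧ ∀ k, A k (π k) = true) :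
    ∀ f : Finset (Fin n), f.Nonempty → f ≠ Finset.univ →
      f.card + 1 ≤ (Finset.univ.filter (fun j => ∃ i ∈ f, A i j = true)).card := by
  intro f hf hf_univ
  rw [show univ.filter (fun j => ∃ i ∈ f, A i j = true) = columnNeighbors A f by ext; simp]
  by_contra! hcard
  have hcover' : ∀ i j, A i j = true →
      ∃ σ : Fin n → Fin n, Function.Injective σ ∧ σ i = j ∧ ∀ k, A k (σ k) = true := by
    intro i j hij
    obtain ⟨π, hπi, hπ⟩ := hcover i j hij
    exact ⟨π, π.injective, hπi, hπ⟩
  refine hf_univ (eq_univ_of_bipartiteAdj_closed hconn (g := columnNeighbors A f) ?_ ?_ hf)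
  · exact fun i j hij hi => mem_columnNeighbors.2 ⟨i, hi, hij⟩
  · exact fun i j hij => mem_of_mem_columnNeighbors hcover' (by omega) hij

/-- Let `A` be an `n × n` 0–1 matrix (`n ≥ 2`) whose bipartite graph (on the
disjoint union of rows and columns, with an edge between row `i` and column `j` iff
`A i j = 1`) is connected, and in which every 1-entry lies on some transversal.  Then `A`
satisfies the strong Hall condition: `|Γ(f)| ≥ |f| + 1` for every nonempty proper subset
`f` of the rows. -/
theorem stmt15 (n : ℕ) (hn : 2 ≤ n) (A : Fin n → Fin n → Bool)
    (hconn : ∀ u v : Fin n ⊕ Fin n,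
      Relation.ReflTransGen
        (fun a b =>
          (∃ i j, A i j = true ∧ a = Sum.inl i ∧ b = Sum.inr j) ∨
          (∃ i j, A i j = true ∧ a = Sum.inr j ∧ b = Sum.inl i)) u v)
    (hcover : ∀ i j : Fin n, A i j = true →
      ∃ π : Equiv.Perm (Fin n), π i = j ∧ ∀ k, A k (π k) = true) :
    ∀ f : Finset (Fin n), f.Nonempty → f ≠ Finset.univ →
      f.card + 1 ≤ (Finset.univ.filter (fun j => ∃ i ∈ f, A i j = true)).card :=
  stmt15_general n A hconn hcover
end

section
/- Let Σ be a structurally nonsingular n × n signature matrix with canonical offsets (c, d). Then for every maximum value transversal T of Σ (not just the one used to compute them), the canonical offsets satisfy d_j − c_i = σ_{ij} for all (i, j) ∈ T; i.e., the canonical offsets are tight on every maximum value transversal. -/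
/-!
Complementary slackness for the assignment problem: dual feasibility bounds every entry of a
transversal `π` by `d (π i) - c i`, and summing these bounds along `π` gives `∑ d - ∑ c`.
When `π` attains the dual value, the sum of the slacks is zero, so every slack vanishes.
-/

open Finset

section ComplementarySlackness

variable {ι α : Type*} [Fintype ι] [AddCommGroup α] [LinearOrder α] [IsOrderedAddMonoid α]

theorem eq_sub_of_le_sub_of_sum_eq (π : Equiv.Perm ι) (s c d : ι → α)
    (hle : ∀ i, s i ≤ d (π i) - c i) (hsum : ∑ j, d j - ∑ i, c i = ∑ i, s i) (i : ι) :
    s i = d (π i) - c i := by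
  have hsum' : ∑ i, s i = ∑ i, (d (π i) - c i) := by
    rw [sum_sub_distrib, Equiv.sum_comp π d, hsum]
  exact (sum_eq_sum_iff_of_le fun i _ => hle i).mp hsum' i (mem_univ i)

theorem withBot_eq_sub_of_le_sub_of_sum_eq (π : Equiv.Perm ι) (S : ι → ι → WithBot α)
    (c d : ι → α) (hπ : ∀ i, S i (π i) ≠ ⊥)
    (hle : ∀ i, S i (π i) ≤ ((d (π i) - c i : α) : WithBot α))
    (hsum : ((∑ j, d j - ∑ i, c i : α) : WithBot α) = ∑ i, S i (π i)) (i : ι) :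
    S i (π i) = ((d (π i) - c i : α) : WithBot α) := by
  set s : ι → α := fun i => (S i (π i)).unbot (hπ i)
  have hSs : ∀ i, S i (π i) = (s i : WithBot α) := fun i => (WithBot.coe_unbot _ (hπ i)).symm
  simp only [hSs, WithBot.coe_le_coe, WithBot.coe_inj] at hle ⊢
  rw [sum_congr rfl fun i _ => hSs i, ← WithBot.coe_sum, WithBot.coe_inj] at hsum
  exact eq_sub_of_le_sub_of_sum_eq π s c d hle hsum i

end ComplementarySlackness

theorem stmt17_general (n : ℕ) (S : Fin n → Fin n → WithBot ℤ)
    (π₀ : Equiv.Perm (Fin n))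
    (c d : Fin n → ℤ)
    (hfeas : ∀ i j : Fin n, S i j ≠ ⊥ → S i j ≤ ((d j - c i : ℤ) : WithBot ℤ))
    (hopt : (((∑ j, d j) - (∑ i, c i) : ℤ) : WithBot ℤ) = ∑ i, S i (π₀ i)) :
    ∀ π : Equiv.Perm (Fin n), (∀ i, S i (π i) ≠ ⊥) →
      (∑ i, S i (π i) = ∑ i, S i (π₀ i)) →
      ∀ i, S i (π i) = ((d (π i) - c i : ℤ) : WithBot ℤ) := fun π hπ hsum =>
  withBot_eq_sub_of_le_sub_of_sum_eq π S c d hπ (fun i => hfeas i (π i) (hπ i))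
    (hopt.trans hsum.symm)

/-- Let `S` be a structurally nonsingular `n × n` signature matrix with
maximum transversal value witnessed by the maximum value transversal `π₀`, and let `(c, d)`
be its canonical offsets: the elementwise smallest nonnegative dual-feasible pair whose dual
objective `∑ d j − ∑ c i` equals the maximum transversal value.  Then for *every* maximum
value transversal `π` of `S`, the canonical offsets are tight: `d (π i) − c i = σ i (π i)`
for all `i`. -/
theorem stmt17 (n : ℕ) (S : Fin n → Fin n → WithBot ℤ)
    (π₀ : Equiv.Perm (Fin n)) (hπ₀ : ∀ i, S i (π₀ i) ≠ ⊥)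
    (hmax₀ : ∀ τ : Equiv.Perm (Fin n), (∀ i, S i (τ i) ≠ ⊥) →
      ∑ i, S i (τ i) ≤ ∑ i, S i (π₀ i))
    (c d : Fin n → ℤ)
    (hc : ∀ i, 0 ≤ c i) (hd : ∀ j, 0 ≤ d j)
    (hfeas : ∀ i j : Fin n, S i j ≠ ⊥ → S i j ≤ ((d j - c i : ℤ) : WithBot ℤ))
    (hopt : (((∑ j, d j) - (∑ i, c i) : ℤ) : WithBot ℤ) = ∑ i, S i (π₀ i))
    (hmin : ∀ c' d' : Fin n → ℤ, (∀ i, 0 ≤ c' i) → (∀ j, 0 ≤ d' j) →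
      (∀ i j : Fin n, S i j ≠ ⊥ → S i j ≤ ((d' j - c' i : ℤ) : WithBot ℤ)) →
      (((∑ j, d' j) - (∑ i, c' i) : ℤ) : WithBot ℤ) = ∑ i, S i (π₀ i) →
      (∀ i, c i ≤ c' i) ∧ (∀ j, d j ≤ d' j)) :
    ∀ π : Equiv.Perm (Fin n), (∀ i, S i (π i) ≠ ⊥) →
      (∑ i, S i (π i) = ∑ i, S i (π₀ i)) →
      ∀ i, S i (π i) = ((d (π i) - c i : ℤ) : WithBot ℤ) :=
  stmt17_general n S π₀ c d hfeas hopt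
end

section
/- Let A be an n × n 0–1 matrix with a perfect matching M in its bipartite graph, and form the directed graph G_d(A) on n vertices (one per matched pair) with an arc from vertex k to vertex l (k ≠ l) whenever the column matched at vertex k appears with a 1 in the row matched at vertex l. Then the strongly connected components of G_d(A), ordered in reverse topological order, yield permutations P, Q such that PAQ is block upper triangular with irreducible diagonal blocks; moreover, this block structure (the partition of rows/columns into blocks) is independent of the choice of perfect matching M. -/
/-- The directed graph `G_d(A)` induced by a perfect matching `π` of the 0–1 matrix `A`:
an arc from the matched pair at `a` to the matched pair at `c` (with `c ≠ a`) whenever the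
column `π a` matched at `a` has a 1 in the row `c`. -/
def dmArc {n : ℕ} (A : Fin n → Fin n → Bool) (π : Equiv.Perm (Fin n))
    (a c : Fin n) : Prop :=
  c ≠ a ∧ A c (π a) = true

/-!
Two perfect matchings `π`, `σ` differ by the permutation `σ⁻¹ π`, and `σ⁻¹ π x → x` is an arc
of `G_σ`. Following the cycles of `σ⁻¹ π` backwards, `x` also reaches `σ⁻¹ π x`, so every arc
`a → c` of `G_π` is replaced by the path `a ⟶* σ⁻¹ π a → c` of `G_σ`: reachability, hence the
strongly connected components and their partial order, do not depend on the matching.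
Ranking the components compatibly with that order (by the binary code of the set of vertices
they reach) and sorting the matched pairs by rank gives the block triangular form; a proper
nonempty part of a component is entered by an arc from the rest of the component, which
supplies the extra column needed for irreducibility of the diagonal block.
-/

open Finset Relation

theorem Equiv.Perm.reflTransGen_apply_of_forall {α : Type*} [Finite α] {r : α → α → Prop}
    {f : Equiv.Perm α} (h : ∀ x, ReflTransGen r (f x) x) (x : α) :
    ReflTransGen r x (f x) := by
  have hpow : ∀ (k : ℕ) y, ReflTransGen r ((f ^ k) y) y := by
    intro k
    induction k with
    | zero => exact fun y => .refl
    | succ k ih =>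
      intro y
      rw [pow_succ, Equiv.Perm.mul_apply]
      exact (ih (f y)).trans (h y)
  obtain ⟨k, -, hk⟩ :=
    (Equiv.Perm.sameCycle_apply_left.mpr (Equiv.Perm.SameCycle.refl f x)).exists_pow_eq'
  simpa [hk] using hpow k (f x)

theorem Relation.ReflTransGen.exists_step_into {α : Type*} {r : α → α → Prop} {S : Set α}
    {x y : α} (h : ReflTransGen r x y) (hx : x ∉ S) (hy : y ∈ S) :
    ∃ u v, ReflTransGen r x u ∧ r u v ∧ u ∉ S ∧ v ∈ S := by
  induction h using ReflTransGen.head_induction_on with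
  | refl => exact absurd hy hx
  | @head a c hac _ ih =>
    by_cases hc : c ∈ S
    · exact ⟨a, c, .refl, hac, hx, hc⟩
    · obtain ⟨u, v, hcu, huv, hu, hv⟩ := ih hc
      exact ⟨u, v, .head hac hcu, huv, hu, hv⟩

theorem Finset.exists_monotone_injective_fin (α : Type*) [Fintype α] :
    ∃ p, ∃ code : Finset α → Fin p, Monotone code ∧ Function.Injective code := by
  classical
  let e : α ↪ ℕ := (Fintype.equivFin α).toEmbedding.trans Fin.valEmbedding
  refine ⟨2 ^ Fintype.card α,
    fun s => ⟨∑ i ∈ s.map e, 2 ^ i, Nat.geomSum_lt le_rfl (by simp [e])⟩, ?_, ?_⟩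
  · exact fun s t hst => Fin.mk_le_mk.2 (sum_le_sum_of_subset (map_subset_map.2 hst))
  · exact fun s t hst => map_injective e (geomSum_injective le_rfl (Fin.mk.inj hst))

theorem Relation.exists_fin_rank_reflTransGen {α : Type*} [Fintype α] (r : α → α → Prop) :
    ∃ p, ∃ rank : α → Fin p, (∀ a c, ReflTransGen r a c → rank c ≤ rank a) ∧
      ∀ a c, rank a = rank c ↔ ReflTransGen r a c ∧ ReflTransGen r c a := by
  classical
  obtain ⟨p, code, hmono, hinj⟩ := Finset.exists_monotone_injective_fin α
  let reach (a : α) : Finset α := univ.filter (ReflTransGen r a)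
  have mem_reach {a c : α} : c ∈ reach a ↔ ReflTransGen r a c := by simp [reach]
  have reach_subset {a c : α} (hac : ReflTransGen r a c) : reach c ⊆ reach a :=
    fun x hx => mem_reach.2 (hac.trans (mem_reach.1 hx))
  refine ⟨p, fun a => code (reach a), fun a c hac => hmono (reach_subset hac), fun a c => ?_⟩
  refine ⟨fun h => ?_, fun ⟨hac, hca⟩ => congrArg code ((reach_subset hca).antisymm
    (reach_subset hac))⟩
  have hreach : reach a = reach c := hinj h
  exact ⟨mem_reach.1 (hreach ▸ mem_reach.2 .refl), mem_reach.1 (hreach ▸ mem_reach.2 .refl)⟩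

section MatchingGraph

variable {n : ℕ} {A : Fin n → Fin n → Bool} {π σ : Equiv.Perm (Fin n)}

theorem reflTransGen_dmArc_of_apply {a c : Fin n} (h : A c (σ a) = true) :
    ReflTransGen (dmArc A σ) a c := by
  by_cases hca : c = a
  · rw [hca]
  · exact .single ⟨hca, h⟩

theorem reflTransGen_dmArc_inv_apply (hπ : ∀ i, A i (π i) = true) (x : Fin n) :
    ReflTransGen (dmArc A σ) (σ⁻¹ (π x)) x ∧ ReflTransGen (dmArc A σ) x (σ⁻¹ (π x)) := by
  have back (y : Fin n) : ReflTransGen (dmArc A σ) ((σ⁻¹ * π) y) y :=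
    reflTransGen_dmArc_of_apply (by simpa using hπ y)
  exact ⟨back x, Equiv.Perm.reflTransGen_apply_of_forall back x⟩

theorem Relation.ReflTransGen.dmArc_of_matching (hπ : ∀ i, A i (π i) = true) {a c : Fin n}
    (h : ReflTransGen (dmArc A π) a c) : ReflTransGen (dmArc A σ) a c := by
  induction h with
  | refl => exact .refl
  | tail _ hbc ih =>
    exact ih.trans ((reflTransGen_dmArc_inv_apply hπ _).2.trans
      (reflTransGen_dmArc_of_apply (by simpa using hbc.2)))

theorem reflTransGen_dmArc_iff (hπ : ∀ i, A i (π i) = true) (hσ : ∀ i, A i (σ i) = true)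
    {a c : Fin n} : ReflTransGen (dmArc A π) a c ↔ ReflTransGen (dmArc A σ) a c :=
  ⟨.dmArc_of_matching hπ, .dmArc_of_matching hσ⟩

theorem card_add_one_le_card_block_neighbours (hπ : ∀ i, A i (π i) = true)
    {β : Type*} [PartialOrder β] [DecidableEq β] (key : Fin n → β)
    (hle : ∀ a c, ReflTransGen (dmArc A π) a c → key c ≤ key a)
    (heq : ∀ a c, key a = key c → ReflTransGen (dmArc A π) a c)
    (ρ : Equiv.Perm (Fin n)) (k : β) (f : Finset (Fin n))
    (hsub : f ⊆ univ.filter (fun i => key (ρ i) = k)) (hne : f.Nonempty)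
    (hneq : f ≠ univ.filter (fun i => key (ρ i) = k)) :
    f.card + 1 ≤ ((univ.filter (fun i => key (ρ i) = k)).filter
      (fun j => ∃ i ∈ f, A (ρ i) (π (ρ j)) = true)).card := by
  set B := univ.filter (fun i => key (ρ i) = k)
  have mem_B {i : Fin n} : i ∈ B ↔ key (ρ i) = k := by simp [B]
  obtain ⟨j₀, hj₀B, hj₀f⟩ := exists_of_ssubset (Finset.ssubset_iff_subset_ne.2 ⟨hsub, hneq⟩)
  obtain ⟨i₀, hi₀⟩ := hne
  obtain ⟨u, v, hj₀u, huv, hu, hv⟩ :=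
    (heq (ρ j₀) (ρ i₀) ((mem_B.1 hj₀B).trans (mem_B.1 (hsub hi₀)).symm)).exists_step_into
      (S := {x | ρ⁻¹ x ∈ f}) (by simpa using hj₀f) (by simpa using hi₀)
  have hv_key : key v = k := by simpa using mem_B.1 (hsub hv)
  have hu_key : key u = k := le_antisymm (mem_B.1 hj₀B ▸ hle _ _ hj₀u)
    (hv_key ▸ hle _ _ (.single huv))
  have hnew : ρ⁻¹ u ∈ B.filter (fun j => ∃ i ∈ f, A (ρ i) (π (ρ j)) = true) :=
    mem_filter.2 ⟨mem_B.2 (by simpa using hu_key), ρ⁻¹ v, hv, by simpa using huv.2⟩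
  have hold : f ⊆ B.filter (fun j => ∃ i ∈ f, A (ρ i) (π (ρ j)) = true) :=
    fun i hi => mem_filter.2 ⟨hsub hi, i, hi, hπ (ρ i)⟩
  calc f.card + 1 = (insert (ρ⁻¹ u) f).card := (card_insert_of_notMem hu).symm
    _ ≤ _ := card_le_card (insert_subset hnew hold)

end MatchingGraph

/-- Let `A` be an `n × n` 0–1 matrix whose bipartite graph has a perfect
matching.  Then there is a partition of the rows (`Prow`) and of the columns (`Pcol`) into
`p` blocks such that, for every perfect matching `π`, the strongly connected components of
the directed graph `G_d(A)` (ordered in reverse topological order) yield permutations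
`ρ, γ` and a monotone block assignment `b` with: the permuted matrix `(i,j) ↦ A (ρ i) (γ j)`
is block upper triangular with a transversal on its diagonal; two indices lie in the same
block iff their matched pairs are in the same strongly connected component of `G_d(A)`;
each diagonal block is irreducible (strong Hall within the block); and the blocks agree with
the fixed partitions `Prow`/`Pcol` — i.e. the block structure is independent of the choice
of perfect matching. -/
theorem stmt18 (n : ℕ) (A : Fin n → Fin n → Bool)
    (hpm : ∃ π : Equiv.Perm (Fin n), ∀ i, A i (π i) = true) :
    ∃ p : ℕ, ∃ Prow Pcol : Fin n → Fin p,
      ∀ π : Equiv.Perm (Fin n), (∀ i, A i (π i) = true) →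
        ∃ ρ γ : Equiv.Perm (Fin n), ∃ b : Fin n → Fin p,
          Monotone b ∧
          (∀ i, Prow (ρ i) = b i) ∧ (∀ j, Pcol (γ j) = b j) ∧
          (∀ i j : Fin n, b j < b i → A (ρ i) (γ j) = false) ∧
          (∀ i, A (ρ i) (γ i) = true) ∧
          (∀ i j : Fin n, b i = b j ↔
            (Relation.ReflTransGen (dmArc A π) (ρ i) (ρ j) ∧
             Relation.ReflTransGen (dmArc A π) (ρ j) (ρ i))) ∧
          (∀ k : Fin p, ∀ f ⊆ Finset.univ.filter (fun i => b i = k), f.Nonempty →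
            f ≠ Finset.univ.filter (fun i => b i = k) →
            f.card + 1 ≤ ((Finset.univ.filter (fun i => b i = k)).filter
              (fun j => ∃ i ∈ f, A (ρ i) (γ j) = true)).card) := by
  obtain ⟨π₀, hπ₀⟩ := hpm
  obtain ⟨p, key, hle₀, heq₀⟩ := exists_fin_rank_reflTransGen (dmArc A π₀)
  refine ⟨p, key, fun j => key (π₀⁻¹ j), fun π hπ => ?_⟩
  have hle (a c : Fin n) (h : ReflTransGen (dmArc A π) a c) : key c ≤ key a :=
    hle₀ a c ((reflTransGen_dmArc_iff hπ hπ₀).1 h)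
  have heq (a c : Fin n) : key a = key c ↔
      ReflTransGen (dmArc A π) a c ∧ ReflTransGen (dmArc A π) c a := by
    rw [heq₀, reflTransGen_dmArc_iff hπ hπ₀, reflTransGen_dmArc_iff hπ hπ₀]
  set ρ := Tuple.sort key
  refine ⟨ρ, π * ρ, fun i => key (ρ i), Tuple.monotone_sort key, fun i => rfl,
    fun j => (heq₀ _ _).2 (reflTransGen_dmArc_inv_apply hπ (ρ j)), fun i j hlt => ?_,
    fun i => hπ (ρ i), fun i j => heq _ _,
    card_add_one_le_card_block_neighbours hπ key hle (fun a c h => ((heq a c).1 h).1) ρ⟩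
  by_contra hA
  exact hlt.not_ge (hle _ _ (reflTransGen_dmArc_of_apply (Bool.not_eq_false _ ▸ hA)))
end
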